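/- If at a point of ℝ^n one has u_m = 0 and ∇u_m = 0, where u_m(X,y,z,w) = |X|² - ℓy² + η_m·e^{λ_m·x₁}·cos(λ_m·z) with η_m, λ_m > 0, then necessarily x₂ = ⋯ = x_ℓ = 0, y = 0, sin(λ_m·z) = 0, and cos(λ_m·z) = -1. -/

import Mathlib

/-!
The partial derivatives of `u` in the directions `x_k` (`k ≥ 2`), `y` and `z` are `2 x_k`, `-2ℓ y`
and `-λ η e^{λ x₁} sin (λ z)`, so at a critical point all of these vanish. Then `cos (λ z) = ±1`,
and `u = x₁² + η e^{λ x₁} cos (λ z) = 0` rules out `+1`.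
-/

open Real

section Gradient

variable {F : Type*} [NormedAddCommGroup F] [InnerProductSpace ℝ F] [CompleteSpace F]
  {f : F → ℝ} {v e : F} {d : ℝ}

theorem HasDerivAt.eq_zero_of_gradient_eq_zero (hf : DifferentiableAt ℝ f v)
    (hgrad : gradient f v = 0) (h : HasDerivAt (fun t : ℝ => f (v + t • e)) d 0) : d = 0 := by
  have hline : HasDerivAt (fun t : ℝ => v + t • e) e 0 := by
    simpa using ((hasDerivAt_id (0 : ℝ)).smul_const e).const_add v
  have := hf.hasFDerivAt.comp_hasDerivAt_of_eq 0 hline (by simp)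
  rw [← inner_gradient_left, hgrad, inner_zero_left] at this
  exact h.unique this

end Gradient

section QuadExpCos

variable {ι : Type*} (X : Finset ι) (x y z : ι) (c η lam : ℝ)

/-- The paper's `u_m` is the case `X = {x₁, …, x_ℓ}`, `x = x₁`, `c = ℓ`. -/
noncomputable def quadExpCos (w : EuclideanSpace ℝ ι) : ℝ :=
  ∑ j ∈ X, w j ^ 2 - c * w y ^ 2 + η * exp (lam * w x) * cos (lam * w z)

theorem differentiable_quadExpCos [Fintype ι] : Differentiable ℝ (quadExpCos X x y z c η lam) := by
  unfold quadExpCos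
  fun_prop

theorem hasDerivAt_quadExpCos_line (v e : EuclideanSpace ℝ ι) :
    HasDerivAt (fun t : ℝ => quadExpCos X x y z c η lam (v + t • e))
      (∑ j ∈ X, 2 * v j * e j - 2 * c * v y * e y
        + η * exp (lam * v x) * lam * (e x * cos (lam * v z) - e z * sin (lam * v z))) 0 := by
  have hcoord (j : ι) : HasDerivAt (fun t : ℝ => (v + t • e) j) (e j) 0 := by
    simpa using ((hasDerivAt_id (0 : ℝ)).mul_const (e j)).const_add (v j)
  unfold quadExpCos
  refine (((HasDerivAt.fun_sum (u := X) fun j _ => (hcoord j).fun_pow 2).fun_sub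
    (((hcoord y).fun_pow 2).const_mul c)).fun_add
    ((((hcoord x).const_mul lam).exp.const_mul η).fun_mul
      ((hcoord z).const_mul lam).cos)).congr_deriv ?_
  norm_num
  ring

variable {X x y z c η lam} [Fintype ι] [DecidableEq ι]

theorem quadExpCos_zero_critical_point (hx : x ∈ X) (hy : y ∉ X) (hz : z ∉ X) (hyz : y ≠ z)
    (hc : c ≠ 0) (hη : 0 < η) (hlam : lam ≠ 0) {v : EuclideanSpace ℝ ι}
    (h0 : quadExpCos X x y z c η lam v = 0) (hgrad : gradient (quadExpCos X x y z c η lam) v = 0) :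
    (∀ j ∈ X, j ≠ x → v j = 0) ∧ v y = 0 ∧ sin (lam * v z) = 0 ∧ cos (lam * v z) = -1 := by
  have hpartial (k : ι) :=
    (hasDerivAt_quadExpCos_line X x y z c η lam v
      (EuclideanSpace.single k 1)).eq_zero_of_gradient_eq_zero
        (differentiable_quadExpCos X x y z c η lam).differentiableAt hgrad
  have hxy : x ≠ y := ne_of_mem_of_not_mem hx hy
  have hxz : x ≠ z := ne_of_mem_of_not_mem hx hz
  have hX (j : ι) (hj : j ∈ X) (hjx : j ≠ x) : v j = 0 := by
    simpa [hj, hjx, ne_of_mem_of_not_mem hj hy, ne_of_mem_of_not_mem hj hz] using hpartial j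
  have hvy : v y = 0 := by simpa [hy, hxy.symm, hyz, hc] using hpartial y
  have hsin : sin (lam * v z) = 0 := by
    simpa [hz, hxz.symm, hyz.symm, hη.ne', hlam] using hpartial z
  refine ⟨hX, hvy, hsin, ?_⟩
  have hsum : ∑ j ∈ X, v j ^ 2 = v x ^ 2 :=
    Finset.sum_eq_single_of_mem x hx fun j hj hjx => by simp [hX j hj hjx]
  have hu : v x ^ 2 + η * exp (lam * v x) * cos (lam * v z) = 0 := by
    simpa [quadExpCos, hsum, hvy] using h0
  rcases sin_eq_zero_iff_cos_eq.mp hsin with h | h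
  · rw [h, mul_one] at hu
    nlinarith [sq_nonneg (v x), exp_pos (lam * v x)]
  · exact h

end QuadExpCos

/-- if at a point `v ∈ ℝ^n` one has `u_m(v) = 0` and `∇u_m(v) = 0`, where
`u_m(v) = |X|² - ℓ y² + η e^{λ x₁} cos(λ z)` with `η, λ > 0`, then `x₂ = ⋯ = x_ℓ = 0`,
`y = 0`, `sin(λ z) = 0`, and `cos(λ z) = -1`. -/
theorem critical_point_structure (n ℓ : ℕ) (hℓ : 1 ≤ ℓ) (hℓn : ℓ ≤ n - 2)
    (η lam : ℝ) (hη : 0 < η) (hlam : 0 < lam)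
    (u : EuclideanSpace ℝ (Fin n) → ℝ)
    (hu : ∀ v, u v =
      (∑ i : Fin n, if (i : ℕ) < ℓ then (v i) ^ 2 else 0)
        - (ℓ : ℝ) * (v ⟨ℓ, by omega⟩) ^ 2
        + η * Real.exp (lam * v ⟨0, by omega⟩) * Real.cos (lam * v ⟨ℓ + 1, by omega⟩))
    (v : EuclideanSpace ℝ (Fin n)) (h0 : u v = 0) (hgrad : gradient u v = 0) :
    (∀ i : Fin n, 1 ≤ (i : ℕ) → (i : ℕ) < ℓ → v i = 0)
      ∧ v ⟨ℓ, by omega⟩ = 0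
      ∧ Real.sin (lam * v ⟨ℓ + 1, by omega⟩) = 0
      ∧ Real.cos (lam * v ⟨ℓ + 1, by omega⟩) = -1 := by
  have hu' : u = quadExpCos {i : Fin n | (i : ℕ) < ℓ} ⟨0, by omega⟩ ⟨ℓ, by omega⟩
      ⟨ℓ + 1, by omega⟩ ℓ η lam := by
    ext w
    rw [hu, quadExpCos, Finset.sum_filter]
  subst hu'
  obtain ⟨hX, hy, hsin, hcos⟩ := quadExpCos_zero_critical_point (by simp; omega)
    (by simp) (by simp) (by simp) (by positivity) hη hlam.ne' h0 hgrad
  exact ⟨fun i hi1 hiℓ => hX i (by simpa using hiℓ) (Fin.ne_of_val_ne (by dsimp only; omega)),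
    hy, hsin, hcos⟩
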